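/- Euler's pentagonal number identity: (q;q)_∞ = ∑_{n∈ℤ} (-1)^n q^{n(3n-1)/2}, equivalently f(-q) = ∑_{n=0}^{∞} (-1)^n q^{n(3n-1)/2} + ∑_{n=1}^∞ (-1)^n q^{n(3n+1)/2}. -/

import Mathlib

open scoped Classical

/-- `fps k` is `(q^k; q^k)_∞ = ∏_{n≥1} (1 - q^{kn})`, defined coefficient-wise
via truncated products (valid for `k ≥ 1`). -/
noncomputable def fps (k : ℕ) : PowerSeries ℤ :=
  PowerSeries.mk fun n =>
    PowerSeries.coeff n
      (∏ i ∈ Finset.range (n + 1), (1 - (PowerSeries.X : PowerSeries ℤ) ^ (k * (i + 1))))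

/-! Mathlib proves the identity for the limit of the finite products `∏ (1 - X ^ (i + 1))`.
The factors with `i ≥ m` are `1` modulo `X ^ (m + 1)`, so the truncation to `m + 1` factors
used by `fps` already has the limiting `m`-th coefficient. On the other side, `n (3n - 1) = 2m`
says that `m` is the pentagonal number of index `n`; that index is unique and `|n| ≤ m + 1`. -/

open PowerSeries

section

variable {R : Type*} [CommRing R]

theorem PowerSeries.coeff_mul_of_X_pow_dvd_sub_one {m : ℕ} (f : R⟦X⟧) {g : R⟦X⟧}
    (hg : X ^ (m + 1) ∣ g - 1) : coeff m (f * g) = coeff m f := by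
  obtain ⟨h, hh⟩ := hg
  have : f * g = f + X ^ (m + 1) * (f * h) := by linear_combination f * hh
  rw [this, map_add, coeff_X_pow_mul', if_neg (by omega), add_zero]

theorem PowerSeries.X_pow_dvd_prod_one_sub_X_pow_sub_one {m : ℕ} (s : Finset ℕ)
    (hs : ∀ i ∈ s, m ≤ i) : (X : R⟦X⟧) ^ (m + 1) ∣ ∏ i ∈ s, (1 - X ^ (i + 1)) - 1 := by
  induction s using Finset.induction_on with
  | empty => simp
  | insert a s ha ih =>
    obtain ⟨h, hh⟩ := ih fun i hi => hs i (Finset.mem_insert_of_mem hi)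
    obtain ⟨k, hk⟩ := Nat.exists_eq_add_of_le (hs a (Finset.mem_insert_self a s))
    rw [Finset.prod_insert ha]
    exact ⟨h - X ^ k * ∏ i ∈ s, (1 - X ^ (i + 1)), by rw [hk]; linear_combination hh⟩

variable (R)

theorem PowerSeries.coeff_prod_range_one_sub_X_pow {m N : ℕ} (hN : m < N) :
    coeff m (∏ i ∈ Finset.range N, (1 - X ^ (i + 1)) : R⟦X⟧) =
      coeff m (pentagonalSeries R) := by
  obtain ⟨s₀, hs₀⟩ := Filter.eventually_atTop.mp (coeff_prod_one_sub_X_pow_eventually_eq R m)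
  have hsub : Finset.range N ⊆ s₀ ∪ Finset.range N := Finset.subset_union_right
  rw [← hs₀ _ Finset.subset_union_left, ← Finset.prod_sdiff hsub, mul_comm,
    coeff_mul_of_X_pow_dvd_sub_one]
  refine X_pow_dvd_prod_one_sub_X_pow_sub_one _ fun i hi => ?_
  have hiN := (Finset.mem_sdiff.mp hi).2
  rw [Finset.mem_range, not_lt] at hiN
  omega

theorem PowerSeries.coeff_pentagonalSeries_eq_sum (m : ℕ) :
    coeff m (pentagonalSeries R) =
      ∑ n ∈ Finset.Icc (-(m : ℤ) - 1) ((m : ℤ) + 1),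
        if n * (3 * n - 1) = 2 * (m : ℤ) then (-1 : R) ^ n.natAbs else 0 := by
  have hpent (n : ℤ) : n * (3 * n - 1) = 2 * (m : ℤ) ↔ pentagonal n = m := by
    rw [← two_mul_natCast_pentagonal]; omega
  simp_rw [hpent]
  by_cases hm : m ∈ Set.range pentagonal
  · obtain ⟨k, rfl⟩ := hm
    have hk : k ∈ Finset.Icc (-(pentagonal k : ℤ) - 1) (pentagonal k + 1) := by
      have := two_mul_natCast_pentagonal k
      rw [Finset.mem_Icc]; constructor <;> nlinarith
    simp [hk]
  · rw [coeff_pentagonalSeries_eq_zero R hm]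
    exact (Finset.sum_eq_zero fun n _ => if_neg fun hn => hm ⟨n, hn⟩).symm

end

/-- Euler's pentagonal number theorem:
`(q;q)_∞ = ∑_{n ∈ ℤ} (-1)ⁿ q^{n(3n-1)/2}`. -/
theorem pentagonal_number_theorem :
    fps 1 = PowerSeries.mk fun m =>
      ∑ n ∈ Finset.Icc (-(m : ℤ) - 1) ((m : ℤ) + 1),
        if n * (3 * n - 1) = 2 * (m : ℤ) then (-1 : ℤ) ^ n.natAbs else 0 := by
  ext m
  simp only [fps, coeff_mk, one_mul]
  rw [coeff_prod_range_one_sub_X_pow ℤ m.lt_succ_self, coeff_pentagonalSeries_eq_sum]
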